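/- Consider the list schedule of a concatenated list P ++ Q of jobs with nonnegative sizes on m ≥ 1 machines with zero initial loads, let F be the minimum machine load after all jobs of P ++ Q have been assigned, and let τ ≥ F. Let b be the number of jobs in P of size strictly greater than τ. Then: (a) the jobs of P of size strictly greater than τ are assigned to pairwise distinct machines and b ≤ m − 1; (b) every job of Q of size at most τ is assigned to a machine that received no job of size strictly greater than τ from P; and (c) the total size of the jobs of Q of size at most τ is at most (m − b)·(F + τ). -/

import Mathlib

/-- The machine of minimum load, ties broken by lowest machine index. -/
noncomputable def bestMachine {m : ℕ} (hm : 0 < m) (ℓ : Fin m → ℝ) : Fin m :=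
  (Finset.univ.filter fun i => ∀ j, ℓ i ≤ ℓ j).min' (by
    obtain ⟨i, -, hi⟩ := Finset.exists_min_image Finset.univ ℓ ⟨⟨0, hm⟩, Finset.mem_univ _⟩
    exact ⟨i, Finset.mem_filter.mpr ⟨Finset.mem_univ _, fun j => hi j (Finset.mem_univ _)⟩⟩)

/-- One step of list scheduling: assign a job of size `s` to the best machine. -/
noncomputable def schedStep {m : ℕ} (hm : 0 < m) (ℓ : Fin m → ℝ) (s : ℝ) : Fin m → ℝ :=
  Function.update ℓ (bestMachine hm ℓ) (ℓ (bestMachine hm ℓ) + s)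

/-- Machine loads after list-scheduling `jobs` starting from initial loads `ℓ`. -/
noncomputable def loadsAfter {m : ℕ} (hm : 0 < m) (ℓ : Fin m → ℝ) : List ℝ → (Fin m → ℝ)
  | [] => ℓ
  | s :: rest => loadsAfter hm (schedStep hm ℓ s) rest

/-- The free time: minimum machine load after all jobs are assigned. -/
noncomputable def freeTime {m : ℕ} (hm : 0 < m) (ℓ : Fin m → ℝ) (jobs : List ℝ) : ℝ :=
  Finset.univ.inf' ⟨⟨0, hm⟩, Finset.mem_univ _⟩ (loadsAfter hm ℓ jobs)

/-- Total completion time of the list schedule. -/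
noncomputable def totalCompletion {m : ℕ} (hm : 0 < m) (ℓ : Fin m → ℝ) : List ℝ → ℝ
  | [] => 0
  | s :: rest => (ℓ (bestMachine hm ℓ) + s) + totalCompletion hm (schedStep hm ℓ s) rest

/-- The sequence of machines to which successive jobs are assigned. -/
noncomputable def assignSeq {m : ℕ} (hm : 0 < m) (ℓ : Fin m → ℝ) : List ℝ → List (Fin m)
  | [] => []
  | s :: rest => bestMachine hm ℓ :: assignSeq hm (schedStep hm ℓ s) rest

/-- The optimal free time of a multiset of jobs: min over orderings, zero initial loads. -/
noncomputable def optFreeTime {m : ℕ} (hm : 0 < m) (J : Multiset ℝ) : ℝ :=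
  sInf {F | ∃ l : List ℝ, (l : Multiset ℝ) = J ∧ F = freeTime hm (fun _ => 0) l}

/-- The optimal total completion time of a multiset of jobs: min over orderings. -/
noncomputable def optTotalCompletion {m : ℕ} (hm : 0 < m) (J : Multiset ℝ) : ℝ :=
  sInf {C | ∃ l : List ℝ, (l : Multiset ℝ) = J ∧ C = totalCompletion hm (fun _ => 0) l}
section helpers
variable {m : ℕ} (hm : 0 < m)

lemma bestMachine_le (ℓ : Fin m → ℝ) (j : Fin m) : ℓ (bestMachine hm ℓ) ≤ ℓ j := by
  have h : bestMachine hm ℓ ∈ Finset.univ.filter fun i => ∀ j, ℓ i ≤ ℓ j :=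
    Finset.min'_mem _ _
  exact (Finset.mem_filter.mp h).2 j

lemma schedStep_apply (ℓ : Fin m → ℝ) (s : ℝ) (i : Fin m) :
    schedStep hm ℓ s i = if i = bestMachine hm ℓ then ℓ i + s else ℓ i := by
  unfold schedStep
  rcases eq_or_ne i (bestMachine hm ℓ) with h | h
  · subst h; simp
  · simp [Function.update_of_ne h, h]

lemma loadsAfter_append (l1 l2 : List ℝ) (ℓ : Fin m → ℝ) :
    loadsAfter hm ℓ (l1 ++ l2) = loadsAfter hm (loadsAfter hm ℓ l1) l2 := by
  induction l1 generalizing ℓ with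
  | nil => simp [loadsAfter]
  | cons s rest ih => simp [loadsAfter, ih]

lemma le_loadsAfter (l : List ℝ) (h : ∀ s ∈ l, 0 ≤ s) (ℓ : Fin m → ℝ) (i : Fin m) :
    ℓ i ≤ loadsAfter hm ℓ l i := by
  induction l generalizing ℓ with
  | nil => simp [loadsAfter]
  | cons s rest ih =>
    have h1 : ℓ i ≤ schedStep hm ℓ s i := by
      rw [schedStep_apply]
      split
      · linarith [h s List.mem_cons_self]
      · exact le_rfl
    simp only [loadsAfter]
    exact h1.trans (ih (fun x hx => h x (List.mem_cons_of_mem _ hx)) _)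

lemma best_le_freeTime (l : List ℝ) (h : ∀ s ∈ l, 0 ≤ s) (ℓ : Fin m → ℝ) :
    ℓ (bestMachine hm ℓ) ≤ freeTime hm ℓ l := by
  obtain ⟨j, -, hj⟩ := Finset.exists_mem_eq_inf' (⟨⟨0, hm⟩, Finset.mem_univ _⟩ :
    (Finset.univ : Finset (Fin m)).Nonempty) (loadsAfter hm ℓ l)
  rw [freeTime, hj]
  exact (bestMachine_le hm ℓ j).trans (le_loadsAfter hm l h ℓ j)

lemma assignSeq_length (l : List ℝ) (ℓ : Fin m → ℝ) : (assignSeq hm ℓ l).length = l.length := by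
  induction l generalizing ℓ with
  | nil => rfl
  | cons s rest ih => simp [assignSeq, ih]

lemma assignSeq_getD (l : List ℝ) (ℓ : Fin m → ℝ) (t : ℕ) (ht : t < l.length) :
    (assignSeq hm ℓ l).getD t ⟨0, hm⟩ = bestMachine hm (loadsAfter hm ℓ (l.take t)) := by
  induction l generalizing ℓ t with
  | nil => simp at ht
  | cons s rest ih =>
    cases t with
    | zero => simp [assignSeq, loadsAfter]
    | succ t =>
      simp only [assignSeq, List.getD_cons_succ, List.take_succ_cons, loadsAfter]
      exact ih _ t (by simpa using ht)

end helpers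

section helpers2
variable {m : ℕ} (hm : 0 < m)

lemma loadsAfter_eq_sum (l : List ℝ) (ℓ : Fin m → ℝ) (i : Fin m) :
    loadsAfter hm ℓ l i = ℓ i + ∑ t ∈ (Finset.range l.length).filter
      (fun t => (assignSeq hm ℓ l).getD t ⟨0, hm⟩ = i), l.getD t 0 := by
  induction l generalizing ℓ with
  | nil => simp [loadsAfter, assignSeq]
  | cons s rest ih =>
    simp only [loadsAfter, List.length_cons]
    rw [ih, Finset.sum_filter, Finset.sum_filter, Finset.sum_range_succ']
    simp only [assignSeq, List.getD_cons_succ, List.getD_cons_zero]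
    rw [schedStep_apply]
    rcases eq_or_ne i (bestMachine hm ℓ) with h | h
    · rw [if_pos h, if_pos h.symm]; ring
    · rw [if_neg h, if_neg (Ne.symm h)]; ring

lemma length_filter_eq_card (p : ℝ → Bool) (l : List ℝ) :
    (l.filter p).length =
      ((Finset.range l.length).filter (fun t => p (l.getD t 0) = true)).card := by
  induction l with
  | nil => simp
  | cons a l ih =>
    rw [Finset.card_filter] at *
    rw [List.length_cons, Finset.sum_range_succ']
    simp only [List.getD_cons_succ, List.getD_cons_zero]
    by_cases h : p a = true <;> simp [List.filter_cons, h, ih]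

lemma sum_filter_eq_sum (p : ℝ → Bool) (l : List ℝ) :
    (l.filter p).sum =
      ∑ t ∈ (Finset.range l.length).filter (fun t => p (l.getD t 0) = true), l.getD t 0 := by
  induction l with
  | nil => simp
  | cons a l ih =>
    rw [Finset.sum_filter] at *
    rw [List.length_cons, Finset.sum_range_succ']
    simp only [List.getD_cons_succ, List.getD_cons_zero]
    by_cases h : p a = true <;> simp [List.filter_cons, h, ih] <;> ring

end helpers2
section prefixFacts
variable {m : ℕ} (hm : 0 < m)

/-- Loads after the first `t` jobs. -/
noncomputable def stA (hm : 0 < m) (L : List ℝ) (t : ℕ) : Fin m → ℝ :=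
  loadsAfter hm (fun _ => 0) (L.take t)

/-- The machine receiving job `t`. -/
noncomputable def aA (hm : 0 < m) (L : List ℝ) (t : ℕ) : Fin m :=
  (assignSeq hm (fun _ => 0) L).getD t ⟨0, hm⟩

lemma getD_take (l : List ℝ) (v t : ℕ) (h : v < t) : (l.take t).getD v 0 = l.getD v 0 := by
  rcases lt_or_ge v l.length with hv | hv
  · have h1 : v < (l.take t).length := by simp [List.length_take]; omega
    rw [List.getD_eq_getElem _ _ h1, List.getD_eq_getElem _ _ hv]
    simp [List.getElem_take]
  · rw [List.getD_eq_default, List.getD_eq_default _ _ hv]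
    simp [List.length_take]; omega

variable (L : List ℝ)

lemma getD_nonneg (hL : ∀ s ∈ L, 0 ≤ s) (v : ℕ) : 0 ≤ L.getD v 0 := by
  rcases lt_or_ge v L.length with hv | hv
  · rw [List.getD_eq_getElem _ _ hv]; exact hL _ (List.getElem_mem _)
  · rw [List.getD_eq_default _ _ hv]

lemma aA_eq {t : ℕ} (ht : t < L.length) : aA hm L t = bestMachine hm (stA hm L t) :=
  assignSeq_getD hm L _ t ht

lemma stA_nonneg (hL : ∀ s ∈ L, 0 ≤ s) (t : ℕ) (i : Fin m) : 0 ≤ stA hm L t i := by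
  simpa [stA] using le_loadsAfter hm (L.take t)
    (fun s hs => hL s (List.take_subset t L hs)) (fun _ => 0) i

lemma stA_mono (hL : ∀ s ∈ L, 0 ≤ s) {t t' : ℕ} (htt : t ≤ t') (i : Fin m) : stA hm L t i ≤ stA hm L t' i := by
  have hsplit : L.take t' = L.take t ++ (L.take t').drop t := by
    conv_lhs => rw [← List.take_append_drop t (L.take t')]
    rw [List.take_take, min_eq_left htt]
  show loadsAfter _ _ (L.take t) i ≤ loadsAfter _ _ (L.take t') i
  rw [hsplit, loadsAfter_append]
  exact le_loadsAfter hm _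
    (fun s hs => hL s (List.take_subset _ _ (List.drop_subset _ _ hs))) _ i

lemma stA_le_free (hL : ∀ s ∈ L, 0 ≤ s) {t : ℕ} (ht : t < L.length) :
    stA hm L t (aA hm L t) ≤ freeTime hm (fun _ => 0) L := by
  have hFt : freeTime hm (fun _ => 0) L = freeTime hm (stA hm L t) (L.drop t) := by
    rw [freeTime, freeTime, stA, ← loadsAfter_append, List.take_append_drop]
  rw [aA_eq hm L ht, hFt]
  exact best_le_freeTime hm (L.drop t) (fun s hs => hL s (List.drop_subset _ _ hs)) _

lemma stA_succ {t : ℕ} (ht : t < L.length) :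
    stA hm L (t + 1) = schedStep hm (stA hm L t) (L.getD t 0) := by
  show loadsAfter _ _ (L.take (t + 1)) = _
  have hgt : L[t]? = some (L.getD t 0) := by
    rw [List.getD_eq_getElem _ _ ht, List.getElem?_eq_getElem ht]
  rw [List.take_succ, hgt]
  show loadsAfter _ _ (L.take t ++ [L.getD t 0]) = _
  rw [loadsAfter_append]
  rfl

lemma stA_big (hL : ∀ s ∈ L, 0 ≤ s) {τ : ℝ} {t t' : ℕ} (ht : t < L.length) (htt' : t < t')
    (hbig : τ < L.getD t 0) : τ < stA hm L t' (aA hm L t) := by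
  have h1 : stA hm L (t + 1) (aA hm L t) = stA hm L t (aA hm L t) + L.getD t 0 := by
    rw [stA_succ hm L ht, schedStep_apply, if_pos (aA_eq hm L ht)]
  have h2 : τ < stA hm L (t + 1) (aA hm L t) := by
    have := stA_nonneg hm L hL t (aA hm L t); rw [h1]; linarith
  exact h2.trans_le (stA_mono hm L hL htt' (aA hm L t))

lemma free_nonneg (hL : ∀ s ∈ L, 0 ≤ s) : 0 ≤ freeTime hm (fun _ => 0) L := by
  rw [freeTime]
  exact Finset.le_inf' _ _ (fun j _ => by
    simpa using le_loadsAfter hm L hL (fun _ => 0) j)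

lemma stA_eq_sum {t : ℕ} (ht : t ≤ L.length) (i : Fin m) :
    stA hm L t i =
      ∑ v ∈ (Finset.range t).filter (fun v => aA hm L v = i), L.getD v 0 := by
  classical
  have hlen : (L.take t).length = t := by rw [List.length_take]; omega
  show loadsAfter hm (fun _ => 0) (L.take t) i = _
  rw [loadsAfter_eq_sum, hlen, zero_add]
  apply Finset.sum_congr
  · apply Finset.filter_congr
    intro v hv
    rw [Finset.mem_range] at hv
    have hv' : v < (L.take t).length := by omega
    rw [assignSeq_getD hm _ _ v hv', List.take_take, min_eq_left hv.le,
      aA_eq hm L (by omega : v < L.length)]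
    exact Iff.rfl
  · intro v hv
    have hv2 : v < t := Finset.mem_range.mp (Finset.mem_of_mem_filter v hv)
    exact getD_take L v t hv2

lemma exists_min_machine : ∃ j : Fin m,
    stA hm L L.length j = freeTime hm (fun _ => 0) L := by
  obtain ⟨j, -, hj⟩ := Finset.exists_mem_eq_inf'
    (⟨⟨0, hm⟩, Finset.mem_univ _⟩ : (Finset.univ : Finset (Fin m)).Nonempty)
    (loadsAfter hm (fun _ => 0) L)
  exact ⟨j, by rw [stA, List.take_length, freeTime, hj]⟩

end prefixFacts

/-- in the list schedule of P ++ Q with free time F ≤ τ: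
(a) the τ-big jobs of P go to pairwise distinct machines and number at most m-1;
(b) every τ-small job of Q goes to a machine receiving no τ-big job of P;
(c) the total size of the τ-small jobs of Q is at most (m - b)·(F + τ). -/
theorem stmt15 (m : ℕ) (hm : 0 < m) (P Q : List ℝ)
    (hP : ∀ s ∈ P, 0 ≤ s) (hQ : ∀ s ∈ Q, 0 ≤ s)
    (τ : ℝ) (hτ : freeTime hm (fun _ => 0) (P ++ Q) ≤ τ) :
    ((∀ t t', t < P.length → t' < P.length → t ≠ t' →
        τ < P.getD t 0 → τ < P.getD t' 0 →
        (assignSeq hm (fun _ => 0) (P ++ Q)).getD t ⟨0, hm⟩ ≠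
          (assignSeq hm (fun _ => 0) (P ++ Q)).getD t' ⟨0, hm⟩) ∧
      (P.filter (fun s => τ < s)).length ≤ m - 1) ∧
    (∀ t, P.length ≤ t → t < P.length + Q.length → (P ++ Q).getD t 0 ≤ τ →
      ∀ t' < P.length, τ < P.getD t' 0 →
        (assignSeq hm (fun _ => 0) (P ++ Q)).getD t ⟨0, hm⟩ ≠
          (assignSeq hm (fun _ => 0) (P ++ Q)).getD t' ⟨0, hm⟩) ∧
    (Q.filter (fun s => s ≤ τ)).sum ≤
      ((m - (P.filter (fun s => τ < s)).length : ℕ) : ℝ) *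
        (freeTime hm (fun _ => 0) (P ++ Q) + τ) := by
  classical
  set L := P ++ Q with hLdef
  have hLnn : ∀ s ∈ L, 0 ≤ s := by
    intro s hs; rw [hLdef] at hs; rcases List.mem_append.mp hs with h | h
    exacts [hP s h, hQ s h]
  have hnPQ : L.length = P.length + Q.length := by rw [hLdef, List.length_append]
  have hPn : P.length ≤ L.length := by omega
  have hF0 : 0 ≤ freeTime hm (fun _ => 0) L := free_nonneg hm L hLnn
  have hgetP : ∀ t, t < P.length → L.getD t 0 = P.getD t 0 := by
    intro t ht; rw [hLdef]; exact List.getD_append _ _ _ _ ht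
  have hQL : ∀ u, L.getD (P.length + u) 0 = Q.getD u 0 := by
    intro u; rw [hLdef, List.getD_append_right _ _ _ _ (by omega)]
    congr 1; omega
  have hne : ∀ t t', t < t' → t' < L.length → t < P.length → τ < P.getD t 0 →
      aA hm L t ≠ aA hm L t' := by
    intro t t' htt' ht'n htP hbig heq
    have h1 : stA hm L t' (aA hm L t') ≤ freeTime hm (fun _ => 0) L :=
      stA_le_free hm L hLnn ht'n
    have h2 : τ < stA hm L t' (aA hm L t) :=
      stA_big hm L hLnn (by omega) htt' (by rw [hgetP t htP]; exact hbig)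
    rw [heq] at h2; linarith
  obtain ⟨j, hjF⟩ := exists_min_machine hm L
  have hjne : ∀ t, t < P.length → τ < P.getD t 0 → aA hm L t ≠ j := by
    intro t ht hbig heq
    have h2 : τ < stA hm L L.length (aA hm L t) :=
      stA_big hm L hLnn (by omega) (by omega) (by rw [hgetP t ht]; exact hbig)
    rw [heq, hjF] at h2; linarith
  set T := (Finset.range P.length).filter (fun t => τ < P.getD t 0) with hTdef
  have hmemT : ∀ t ∈ T, t < P.length ∧ τ < P.getD t 0 := by
    intro t ht; rw [hTdef, Finset.mem_filter, Finset.mem_range] at ht; exact ht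
  have hinjT : Set.InjOn (aA hm L) T := by
    intro t ht t' ht' heq
    by_contra hnee
    obtain ⟨h1, h2⟩ := hmemT t ht
    obtain ⟨h3, h4⟩ := hmemT t' ht'
    rcases Ne.lt_or_gt hnee with h | h
    · exact hne t t' h (by omega) h1 h2 heq
    · exact hne t' t h (by omega) h3 h4 heq.symm
  have hbT : (P.filter (fun s => τ < s)).length = T.card := by
    rw [length_filter_eq_card, hTdef]
    exact congrArg Finset.card (Finset.filter_congr (fun x _ => by simp))
  have hTm : T.card ≤ m - 1 := by
    have hsub : ∀ t ∈ T, aA hm L t ∈ Finset.univ.erase j := by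
      intro t ht
      obtain ⟨h1, h2⟩ := hmemT t ht
      exact Finset.mem_erase.mpr ⟨hjne t h1 h2, Finset.mem_univ _⟩
    have := Finset.card_le_card_of_injOn _ hsub hinjT
    simpa [Finset.card_erase_of_mem, Finset.card_univ] using this
  have partb : ∀ t, P.length ≤ t → t < L.length → L.getD t 0 ≤ τ →
      ∀ t' < P.length, τ < P.getD t' 0 → aA hm L t ≠ aA hm L t' := by
    intro t h1 h2 hsmall t' ht' hbig heq
    have hs : stA hm L t (aA hm L t) ≤ freeTime hm (fun _ => 0) L :=
      stA_le_free hm L hLnn h2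
    have hb2 : τ < stA hm L t (aA hm L t') :=
      stA_big hm L hLnn (by omega) (by omega) (by rw [hgetP t' ht']; exact hbig)
    rw [← heq] at hb2; linarith
  refine ⟨⟨?_, ?_⟩, ?_, ?_⟩
  · intro t t' ht ht' htne hb hb'
    show aA hm L t ≠ aA hm L t'
    rcases Ne.lt_or_gt htne with h | h
    · exact hne t t' h (by omega) ht hb
    · exact (hne t' t h (by omega) ht' hb').symm
  · rw [hbT]; exact hTm
  · intro t h1 h2 hsmall t' ht' hbig
    show aA hm L t ≠ aA hm L t'
    exact partb t h1 (by omega) hsmall t' ht' hbig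
  · set F := freeTime hm (fun _ => 0) L with hFdef
    have hFτ : F ≤ τ := hτ
    set S' := (Finset.range Q.length).filter (fun u => Q.getD u 0 ≤ τ) with hS'def
    have hsumS : (Q.filter (fun s => s ≤ τ)).sum = ∑ u ∈ S', Q.getD u 0 := by
      rw [sum_filter_eq_sum, hS'def]
      exact Finset.sum_congr (Finset.filter_congr (fun x _ => by simp)) (fun _ _ => rfl)
    set C := Finset.univ.filter (fun i : Fin m => ∃ t' ∈ T, aA hm L t' = i) with hCdef
    have hTC : T.card ≤ C.card := by
      apply Finset.card_le_card_of_injOn (aA hm L) _ hinjT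
      intro t ht
      rw [Finset.mem_coe, hCdef, Finset.mem_filter]
      exact ⟨Finset.mem_univ _, t, ht, rfl⟩
    have hmemS' : ∀ u ∈ S', u < Q.length ∧ Q.getD u 0 ≤ τ := by
      intro u hu; rw [hS'def, Finset.mem_filter, Finset.mem_range] at hu; exact hu
    have hfib : ∀ i : Fin m,
        ∑ u ∈ S'.filter (fun u => aA hm L (P.length + u) = i), Q.getD u 0 ≤ F + τ := by
      intro i
      rcases (S'.filter (fun u => aA hm L (P.length + u) = i)).eq_empty_or_nonempty with
        he | hnem
      · rw [he, Finset.sum_empty]; linarith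
      · set fib := S'.filter (fun u => aA hm L (P.length + u) = i) with hfibdef
        set u0 := fib.max' hnem with hu0def
        have hu0mem : u0 ∈ fib := fib.max'_mem hnem
        have hu0f := Finset.mem_filter.mp hu0mem
        obtain ⟨hu0r, hu0small⟩ := hmemS' u0 hu0f.1
        have hu0g : aA hm L (P.length + u0) = i := hu0f.2
        have ht0n : P.length + u0 < L.length := by omega
        have hkey : ∑ u ∈ fib.erase u0, Q.getD u 0 ≤ stA hm L (P.length + u0) i := by
          rw [stA_eq_sum hm L (by omega) i]
          have himg : ∑ u ∈ fib.erase u0, Q.getD u 0 =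
              ∑ v ∈ (fib.erase u0).image (fun u => P.length + u), L.getD v 0 := by
            rw [Finset.sum_image (fun x _ y _ h => by omega)]
            exact Finset.sum_congr rfl (fun u _ => (hQL u).symm)
          rw [himg]
          apply Finset.sum_le_sum_of_subset_of_nonneg
          · intro v hv
            obtain ⟨u, hu, rfl⟩ := Finset.mem_image.mp hv
            obtain ⟨hune, hufib⟩ := Finset.mem_erase.mp hu
            have hle : u ≤ u0 := fib.le_max' u hufib
            have hug : aA hm L (P.length + u) = i := (Finset.mem_filter.mp hufib).2
            exact Finset.mem_filter.mpr ⟨Finset.mem_range.mpr (by omega), hug⟩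
          · intro v _ _; exact getD_nonneg L hLnn v
        have hlast : stA hm L (P.length + u0) i ≤ F := by
          rw [← hu0g]; exact stA_le_free hm L hLnn ht0n
        have hsplit2 : ∑ u ∈ fib, Q.getD u 0
            = ∑ u ∈ fib.erase u0, Q.getD u 0 + Q.getD u0 0 :=
          (Finset.sum_erase_add _ _ hu0mem).symm
        rw [hsplit2]
        linarith
    have hclog : ∀ i ∈ C, S'.filter (fun u => aA hm L (P.length + u) = i) = ∅ := by
      intro i hiC
      rw [hCdef, Finset.mem_filter] at hiC
      obtain ⟨-, t', ht'T, hat'⟩ := hiC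
      obtain ⟨ht'P, ht'big⟩ := hmemT t' ht'T
      rw [Finset.eq_empty_iff_forall_notMem]
      intro u hu
      obtain ⟨huS, hug⟩ := Finset.mem_filter.mp hu
      obtain ⟨hur, husmall⟩ := hmemS' u huS
      exact partb (P.length + u) (by omega) (by omega)
        (by rw [hQL u]; exact husmall) t' ht'P ht'big (hug.trans hat'.symm)
    have htotal : ∑ u ∈ S', Q.getD u 0 =
        ∑ i : Fin m, ∑ u ∈ S'.filter (fun u => aA hm L (P.length + u) = i), Q.getD u 0 :=
      (Finset.sum_fiberwise_of_maps_to (fun u _ => Finset.mem_univ _) _).symm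
    rw [hsumS, htotal,
      ← Finset.sum_filter_add_sum_filter_not Finset.univ (fun i => i ∈ C)]
    have hz : ∑ i ∈ Finset.univ.filter (fun i => i ∈ C),
        (∑ u ∈ S'.filter (fun u => aA hm L (P.length + u) = i), Q.getD u 0) = 0 :=
      Finset.sum_eq_zero (fun i hi => by
        rw [hclog i (Finset.mem_filter.mp hi).2, Finset.sum_empty])
    rw [hz, zero_add]
    have hbound : ∑ i ∈ Finset.univ.filter (fun i => ¬ i ∈ C),
        (∑ u ∈ S'.filter (fun u => aA hm L (P.length + u) = i), Q.getD u 0)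
        ≤ (Finset.univ.filter (fun i : Fin m => ¬ i ∈ C)).card • (F + τ) :=
      Finset.sum_le_card_nsmul _ _ _ (fun i _ => hfib i)
    have hcard : (Finset.univ.filter (fun i : Fin m => ¬ i ∈ C)).card = m - C.card := by
      have h1 : Finset.univ.filter (fun i : Fin m => ¬ i ∈ C) = Cᶜ := by
        ext i; simp
      rw [h1, Finset.card_compl, Fintype.card_fin]
    rw [hcard] at hbound
    refine hbound.trans ?_
    rw [nsmul_eq_mul, hbT]
    exact mul_le_mul_of_nonneg_right
      (Nat.cast_le.mpr (Nat.sub_le_sub_left hTC m)) (by linarith)
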